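/- Let M_p satisfy (M.1). Then condition (NA) (for every L > 0 there is A_L with p! ≤ A_L·L^p·M_p for all p) holds if and only if the associated function satisfies M(t) = o(t) as t → ∞. -/

import Mathlib

/-- `assocExp M t = exp(M(t))`, where `M(t) = sup_p log(t^p/M_p)` is the associated
function of the weight sequence `M_p`; valued in `ℝ≥0∞`. -/
noncomputable def assocExp (M : ℕ → ℝ) (t : ℝ) : ENNReal :=
  ⨆ p : ℕ, ENNReal.ofReal (t ^ p / M p)

/-!
(NA) ⇒ `M(t) = o(t)`: from `p! ≤ A L^p M_p` we get `t^p/M_p ≤ A (Lt)^p/p! ≤ A e^{Lt}`,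
so `e^{M(t)} ≤ A e^{εt/2} ≤ e^{εt}` for `L = ε/2` and large `t`.

`M(t) = o(t)` ⇒ (NA): evaluating `e^{M(t)} ≤ e^{εt}` at `t = p/ε` gives
`(p/ε)^p ≤ e^p M_p`, hence `p! ≤ p^p ≤ (εe)^p M_p` for large `p`; take `ε = L/e` and
absorb the finitely many small `p` into the constant `A_L`.
-/

open Filter Real

open scoped Nat

lemma ofReal_pow_div_le_assocExp (M : ℕ → ℝ) (t : ℝ) (p : ℕ) :
    ENNReal.ofReal (t ^ p / M p) ≤ assocExp M t :=
  le_iSup (fun q => ENNReal.ofReal (t ^ q / M q)) p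

lemma assocExp_le_of_factorial_le {M : ℕ → ℝ} (hM : ∀ p, 0 < M p) {A L t : ℝ}
    (hA : 0 ≤ A) (hL : 0 ≤ L) (ht : 0 ≤ t) (h : ∀ p, (p ! : ℝ) ≤ A * L ^ p * M p) :
    assocExp M t ≤ ENNReal.ofReal (A * exp (L * t)) := by
  refine iSup_le fun p => ENNReal.ofReal_le_ofReal ?_
  have hfac : (0 : ℝ) < p ! := by positivity
  calc t ^ p / M p ≤ A * ((L * t) ^ p / p !) := by
        rw [mul_div_assoc', div_le_div_iff₀ (hM p) hfac, mul_pow]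
        calc t ^ p * p ! ≤ t ^ p * (A * L ^ p * M p) := by gcongr; exact h p
          _ = A * (L ^ p * t ^ p) * M p := by ring
    _ ≤ A * exp (L * t) := by
        gcongr; exact pow_div_factorial_le_exp _ (by positivity) p

lemma eventually_factorial_le_of_assocExp_le {M : ℕ → ℝ} (hM : ∀ p, 0 < M p) {ε T : ℝ}
    (hε : 0 < ε) (hT : ∀ t, T ≤ t → assocExp M t ≤ ENNReal.ofReal (exp (ε * t))) :
    ∀ᶠ p : ℕ in atTop, (p ! : ℝ) ≤ (ε * exp 1) ^ p * M p := by
  filter_upwards [eventually_ge_atTop ⌈ε * T⌉₊] with p hp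
  have hTp : T ≤ p / ε := by
    rw [le_div_iff₀ hε, mul_comm]
    exact (Nat.le_ceil _).trans (by exact_mod_cast hp)
  have hbound : (p / ε) ^ p / M p ≤ exp p := by
    have := (ofReal_pow_div_le_assocExp M _ p).trans (hT _ hTp)
    rwa [mul_div_cancel₀ _ hε.ne', ENNReal.ofReal_le_ofReal_iff (exp_pos _).le] at this
  have hpow : (p : ℝ) ^ p = (ε * exp 1) ^ p * ((p / ε) ^ p / exp p) := by
    rw [← exp_one_pow, mul_pow, div_pow]
    field_simp
  calc (p ! : ℝ) ≤ (p : ℝ) ^ p := by exact_mod_cast Nat.factorial_le_pow p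
    _ = (ε * exp 1) ^ p * ((p / ε) ^ p / exp p) := hpow
    _ ≤ (ε * exp 1) ^ p * M p := by
        gcongr
        rwa [div_le_iff₀ (exp_pos _), mul_comm, ← div_le_iff₀ (hM p)]

lemma exists_pos_forall_le_mul_of_eventually_le {a b : ℕ → ℝ} (hb : ∀ p, 0 < b p)
    (h : ∀ᶠ p in atTop, a p ≤ b p) : ∃ A : ℝ, 0 < A ∧ ∀ p, a p ≤ A * b p := by
  obtain ⟨N, hN⟩ := eventually_atTop.1 h
  obtain ⟨C, hC⟩ := ((Set.finite_Iio N).image fun p => a p / b p).bddAbove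
  refine ⟨max C 1, by positivity, fun p => ?_⟩
  rcases lt_or_ge p N with hp | hp
  · rw [← div_le_iff₀ (hb p)]
    exact (hC ⟨p, hp, rfl⟩).trans (le_max_left _ _)
  · exact (hN p hp).trans (le_mul_of_one_le_left (hb p).le (le_max_right _ _))

theorem stmt18_general (M : ℕ → ℝ) (hMpos : ∀ p, 0 < M p) :
    (∀ L : ℝ, 0 < L → ∃ A : ℝ, 0 < A ∧ ∀ p : ℕ, (Nat.factorial p : ℝ) ≤ A * L ^ p * M p) ↔
      (∀ ε : ℝ, 0 < ε → ∃ T : ℝ, ∀ t : ℝ, T ≤ t →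
        assocExp M t ≤ ENNReal.ofReal (Real.exp (ε * t))) := by
  constructor
  · intro hNA ε hε
    obtain ⟨A, hA, hAp⟩ := hNA (ε / 2) (by positivity)
    refine ⟨max 0 (2 * log A / ε), fun t ht => ?_⟩
    have hlogA : log A ≤ ε / 2 * t := by
      have := (le_max_right _ _).trans ht
      rw [div_le_iff₀ hε] at this
      linarith
    calc assocExp M t ≤ ENNReal.ofReal (A * exp (ε / 2 * t)) :=
          assocExp_le_of_factorial_le hMpos hA.le (by positivity) ((le_max_left _ _).trans ht) hAp
      _ ≤ ENNReal.ofReal (exp (ε * t)) := by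
          gcongr
          rw [← exp_log hA, ← exp_add]
          gcongr
          linarith
  · intro ho L hL
    obtain ⟨T, hT⟩ := ho (L / exp 1) (by positivity)
    have hNA := eventually_factorial_le_of_assocExp_le hMpos (by positivity) hT
    rw [div_mul_cancel₀ _ (exp_pos 1).ne'] at hNA
    simpa only [mul_assoc] using
      exists_pos_forall_le_mul_of_eventually_le (fun p => by have := hMpos p; positivity) hNA

/-- For `M_p` satisfying (M.1), condition (NA) — for every `L > 0` there is
`A_L > 0` with `p! ≤ A_L·L^p·M_p` for all `p` — holds if and only if the associated
function satisfies `M(t) = o(t)` as `t → ∞` (equivalently, for every `ε > 0` one has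
`e^{M(t)} ≤ e^{εt}` for all sufficiently large `t`). -/
theorem stmt18 (M : ℕ → ℝ) (hMpos : ∀ p, 0 < M p) (hM0 : M 0 = 1)
    (hM1 : ∀ p : ℕ, 1 ≤ p → (M p) ^ 2 ≤ M (p - 1) * M (p + 1)) :
    (∀ L : ℝ, 0 < L → ∃ A : ℝ, 0 < A ∧ ∀ p : ℕ, (Nat.factorial p : ℝ) ≤ A * L ^ p * M p) ↔
      (∀ ε : ℝ, 0 < ε → ∃ T : ℝ, ∀ t : ℝ, T ≤ t →
        assocExp M t ≤ ENNReal.ofReal (Real.exp (ε * t))) :=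
  stmt18_general M hMpos
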